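/- For every α ∈ (0,1) there exist ε₀ > 0 and n₀ such that for every ε ∈ (0,ε₀] the following holds: if D is a directed graph on 2n ≥ 2n₀ vertices with δ⁰(D) ≥ (1 − ε)n and D is not α-extremal, then for every ordered pair (x,y) of distinct vertices of D, the number of (x,y)-absorbers is at least α¹²·n⁴ and the number of (x,y)-connectors is at least α³·n². -/

import Mathlib

noncomputable def outDeg {V : Type*} (E : V → V → Prop) (v : V) : ℕ := {w | E v w}.ncard
noncomputable def inDeg {V : Type*} (E : V → V → Prop) (v : V) : ℕ := {w | E w v}.ncard

/-- A digraph on `N` vertices is `α`-extremal. -/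
def AlphaExtremal (α : ℝ) {V : Type*} (E : V → V → Prop) : Prop :=
  ∃ A B : Set V,
    (1 - α) * (Nat.card V : ℝ) / 2 ≤ (A.ncard : ℝ) ∧
    (A.ncard : ℝ) ≤ (1 + α) * (Nat.card V : ℝ) / 2 ∧
    (1 - α) * (Nat.card V : ℝ) / 2 ≤ (B.ncard : ℝ) ∧
    (B.ncard : ℝ) ≤ (1 + α) * (Nat.card V : ℝ) / 2 ∧
    (∀ a ∈ A, ({b ∈ B | E a b}.ncard : ℝ) ≤ α * (Nat.card V : ℝ) / 2) ∧
    (∀ b ∈ B, ({a ∈ A | E a b}.ncard : ℝ) ≤ α * (Nat.card V : ℝ) / 2)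

/-- `(a,b)` is an `(x,y)`-connector: `a,b,x,y` are distinct and
`x a b y` is an anti-directed path containing the edge `(a,b)`. -/
def IsConnector {V : Type*} (E : V → V → Prop) (x y a b : V) : Prop :=
  ([a, b, x, y] : List V).Pairwise (· ≠ ·) ∧ E a x ∧ E a b ∧ E y b

/-- `(a,b,c,d)` is an `(x,y)`-absorber. -/
def IsAbsorber {V : Type*} (E : V → V → Prop) (x y a b c d : V) : Prop :=
  ([a, b, c, d, x, y] : List V).Pairwise (· ≠ ·) ∧
    E a b ∧ E c b ∧ E c d ∧ E a x ∧ E c x ∧ E y b ∧ E y d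

/-!
If `D` is not `α`-extremal, then between any two vertex sets `A`, `B` of size at least `m` there are at
least `(m - (1 - α) n) α n` edges: otherwise the vertices of `A` with at most `α n`
out-neighbours in `B`, and then the vertices of `B` with at most `α n` in-neighbours among those,
would form an extremal pair. Applied to `N⁻(x)` and `N⁺(y)` this yields about `α² n²` edges
`(a, b)` with `a → x` and `y → b`, i.e. connectors.

The same dichotomy shows that fewer than `(1 - α) n` vertices have at most `α³ n` out-neighbours
in `N⁺(y)`, and likewise for in-neighbours in `N⁻(x)`. Discarding connectors `(c, b)` that use
such a vertex loses at most `2 (1 - α) α³ n²` of them, and each remaining one extends to at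
least `(α³ n)² / 2` absorbers `(a, b, c, d)` with `a ∈ N⁻(x) ∩ N⁻(b)`, `d ∈ N⁺(y) ∩ N⁺(c)`.

For `α > 1/2` the statement is vacuous: once `(2α - 1) n ≥ 1`, any set of `⌈(1 - α) n⌉ ≤ α n`
vertices, taken as both `A` and `B`, witnesses that `D` is `α`-extremal.
-/

open Finset

lemma card_mul_card_le_card_filter_ne_add {ι : Type*} [DecidableEq ι] (s t : Finset ι) :
    #s * #t ≤ #{q ∈ s ×ˢ t | q.1 ≠ q.2} + #s := by
  rw [← card_product, ← card_filter_add_card_filter_not (fun q : ι × ι ↦ q.1 ≠ q.2)]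
  refine add_le_add le_rfl (card_le_card_of_injOn Prod.fst (fun q hq ↦ ?_) fun q hq q' hq' h ↦ ?_)
  · exact (mem_product.1 (mem_filter.1 hq).1).1
  · simp only [mem_coe, mem_filter, not_not] at hq hq'
    exact Prod.ext h (by rw [← hq.2, ← hq'.2, h])

lemma cast_card_sub_cast_card_le_card_sdiff {ι : Type*} [DecidableEq ι] (s t : Finset ι) :
    (#s : ℝ) - #t ≤ #(s \ t) := by
  have : (#s : ℝ) ≤ #(s \ t) + #t := by exact_mod_cast card_le_card_sdiff_add_card
  linarith

lemma mul_le_one_sub_mul_sub_two_sub {α ε N : ℝ} (hα0 : 0 < α) (hα2 : α ≤ 1 / 2)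
    (hε : ε ≤ α / 8) (hn : 40 ≤ α ^ 3 * N) :
    33 / 40 * (α * N) ≤ (1 - ε) * N - 2 - (1 - α) * N := by
  have hN : 0 < N := pos_of_mul_pos_right (by linarith) (pow_pos hα0 3).le
  have hα3 : α ^ 3 * N ≤ α * N / 4 := by
    have hα2' : α ^ 2 ≤ 1 / 4 := by nlinarith
    rw [show α ^ 3 * N = α ^ 2 * (α * N) by ring]
    nlinarith [mul_le_mul_of_nonneg_right hα2' (mul_pos hα0 hN).le]
  nlinarith

section Digraph

variable {V : Type*} {E : V → V → Prop}

lemma inDeg_eq_card [Fintype V] [DecidableRel E] (v : V) : inDeg E v = #{w | E w v} := by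
  rw [inDeg, ← Set.ncard_coe_finset, coe_filter_univ]

lemma outDeg_eq_card [Fintype V] [DecidableRel E] (v : V) : outDeg E v = #{w | E v w} := by
  rw [outDeg, ← Set.ncard_coe_finset, coe_filter_univ]

section Interedges

variable [DecidableRel E] {A B s : Finset V} {t : ℝ}

lemma card_interedges_eq_sum_left :
    #(Rel.interedges E A B) = ∑ a ∈ A, #{b ∈ B | E a b} := by
  simp only [Rel.interedges, card_filter, sum_product]

lemma card_interedges_eq_sum_right :
    #(Rel.interedges E A B) = ∑ b ∈ B, #{a ∈ A | E a b} := by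
  simp only [Rel.interedges, card_filter, sum_product_right]

lemma card_mul_le_card_interedges_left (hs : s ⊆ A) (h : ∀ a ∈ s, t ≤ #{b ∈ B | E a b}) :
    #s * t ≤ #(Rel.interedges E A B) := by
  rw [card_interedges_eq_sum_left, Nat.cast_sum, ← nsmul_eq_mul]
  exact (card_nsmul_le_sum s _ t h).trans
    (sum_le_sum_of_subset_of_nonneg hs fun _ _ _ ↦ Nat.cast_nonneg _)

lemma card_mul_le_card_interedges_right (hs : s ⊆ B) (h : ∀ b ∈ s, t ≤ #{a ∈ A | E a b}) :
    #s * t ≤ #(Rel.interedges E A B) := by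
  rw [card_interedges_eq_sum_right, Nat.cast_sum, ← nsmul_eq_mul]
  exact (card_nsmul_le_sum s _ t h).trans
    (sum_le_sum_of_subset_of_nonneg hs fun _ _ _ ↦ Nat.cast_nonneg _)

lemma card_interedges_le_card_mul_left (h : ∀ a ∈ A, #{b ∈ B | E a b} ≤ t) :
    #(Rel.interedges E A B) ≤ #A * t := by
  rw [card_interedges_eq_sum_left, Nat.cast_sum, ← nsmul_eq_mul]
  exact sum_le_card_nsmul A _ t h

lemma card_interedges_le_card_mul_right (h : ∀ b ∈ B, #{a ∈ A | E a b} ≤ t) :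
    #(Rel.interedges E A B) ≤ #B * t := by
  rw [card_interedges_eq_sum_right, Nat.cast_sum, ← nsmul_eq_mul]
  exact sum_le_card_nsmul B _ t h

lemma card_interedges_le_sdiff_add [DecidableEq V] (A B C D : Finset V) :
    #(Rel.interedges E A B) ≤ #(Rel.interedges E (A \ C) (B \ D))
      + #(Rel.interedges E C B) + #(Rel.interedges E A D) := by
  refine (card_le_card fun p hp ↦ ?_).trans ((card_union_le _ _).trans
    (add_le_add (card_union_le _ _) le_rfl))
  simp only [mem_union, Rel.mem_interedges_iff, mem_sdiff] at hp ⊢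
  tauto

end Interedges

section Extremal

variable {α : ℝ} {n : ℕ}

lemma AlphaExtremal.of_swap (h : AlphaExtremal α fun a b ↦ E b a) : AlphaExtremal α E := by
  obtain ⟨A, B, hA₁, hA₂, hB₁, hB₂, hAB, hBA⟩ := h
  exact ⟨B, A, hB₁, hB₂, hA₁, hA₂, hBA, hAB⟩

variable [DecidableRel E]

lemma alphaExtremal_of_finsets (hα : 0 ≤ α) (hcard : Nat.card V = 2 * n) {A B : Finset V}
    (hA : (1 - α) * n ≤ #A) (hB : (1 - α) * n ≤ #B)
    (hAB : ∀ a ∈ A, #{b ∈ B | E a b} ≤ α * n) (hBA : ∀ b ∈ B, #{a ∈ A | E a b} ≤ α * n) :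
    AlphaExtremal α E := by
  have trim (S : Finset V) (hS : (1 - α) * n ≤ #S) :
      ∃ S' ⊆ S, (1 - α) * n ≤ #S' ∧ (#S' : ℝ) ≤ (1 + α) * n := by
    obtain ⟨S', hS'S, hS'⟩ := exists_subset_card_eq (min_le_left #S n)
    have hS'R : (#S' : ℝ) = min (#S : ℝ) n := by rw [hS']; push_cast; rfl
    refine ⟨S', hS'S, ?_, ?_⟩ <;> rw [hS'R]
    · exact le_min hS (by nlinarith [n.cast_nonneg (α := ℝ)])
    · exact (min_le_right _ _).trans (by nlinarith [n.cast_nonneg (α := ℝ)])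
  obtain ⟨A', hA'A, hA'⟩ := trim A hA
  obtain ⟨B', hB'B, hB'⟩ := trim B hB
  have hN : (Nat.card V : ℝ) = 2 * n := by exact_mod_cast hcard
  have hcoe (S : Finset V) (p : V → Prop) [DecidablePred p] :
      {v ∈ (S : Set V) | p v}.ncard = #{v ∈ S | p v} := by
    rw [← Set.ncard_coe_finset, coe_filter]; rfl
  refine ⟨A', B', ?_, ?_, ?_, ?_, fun a ha ↦ ?_, fun b hb ↦ ?_⟩ <;>
    simp only [Set.ncard_coe_finset, hcoe, hN]
  · linarith [hA'.1]
  · linarith [hA'.2]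
  · linarith [hB'.1]
  · linarith [hB'.2]
  · exact le_trans (by gcongr) ((hAB a (hA'A ha)).trans_eq (by ring))
  · exact le_trans (by gcongr) ((hBA b (hB'B hb)).trans_eq (by ring))

lemma alphaExtremal_of_one_le_two_mul_sub_one_mul [Fintype V] (hcard : Nat.card V = 2 * n)
    (h : 1 ≤ (2 * α - 1) * n) : AlphaExtremal α E := by
  set k := ⌈(1 - α) * n⌉₊
  have hk : (k : ℝ) ≤ α * n ∧ (k : ℝ) ≤ 2 * n := by
    rcases le_or_gt ((1 - α) * n) 0 with h0 | h0
    · rw [show k = 0 from Nat.ceil_eq_zero.2 h0, Nat.cast_zero]; constructor <;> nlinarith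
    · have := Nat.ceil_lt_add_one h0.le; constructor <;> nlinarith
  obtain ⟨S, -, hS⟩ := exists_subset_card_eq (s := (univ : Finset V)) (n := k) (by
    rw [card_univ, ← Nat.card_eq_fintype_card, hcard]; exact_mod_cast hk.2)
  have hSlow : (1 - α) * n ≤ #S := hS ▸ Nat.le_ceil _
  have hSsmall (T : Finset V) (hT : T ⊆ S) : (#T : ℝ) ≤ α * n :=
    le_trans (by exact_mod_cast card_le_card hT) (hS ▸ hk.1)
  exact alphaExtremal_of_finsets (by nlinarith) hcard hSlow hSlow
    (fun _ _ ↦ hSsmall _ (filter_subset _ _)) (fun _ _ ↦ hSsmall _ (filter_subset _ _))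

end Extremal

section NonExtremal

variable [DecidableRel E] {α : ℝ} {n : ℕ}

lemma sub_mul_le_card_interedges_of_forall_le (hα : 0 ≤ α) (hcard : Nat.card V = 2 * n)
    (hne : ¬ AlphaExtremal α E) {A B : Finset V} (hA : (1 - α) * n ≤ #A)
    (hAB : ∀ a ∈ A, #{b ∈ B | E a b} ≤ α * n) :
    (#B - (1 - α) * n) * (α * n) ≤ #(Rel.interedges E A B) := by
  set B₁ := {b ∈ B | (#{a ∈ A | E a b} : ℝ) ≤ α * n}
  have hB₁ : (#B₁ : ℝ) < (1 - α) * n := by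
    by_contra! h
    refine hne (alphaExtremal_of_finsets hα hcard hA h (fun a ha ↦ le_trans ?_ (hAB a ha))
      fun b hb ↦ (mem_filter.1 hb).2)
    exact_mod_cast card_le_card (filter_subset_filter _ (filter_subset _ _))
  have hαn : 0 ≤ α * n := mul_nonneg hα n.cast_nonneg
  have hsplit := card_filter_add_card_filter_not (s := B) fun b ↦ (#{a ∈ A | E a b} : ℝ) ≤ α * n
  calc (#B - (1 - α) * n) * (α * n)
      ≤ #{b ∈ B | ¬ (#{a ∈ A | E a b} : ℝ) ≤ α * n} * (α * n) := by
        gcongr; rw [← hsplit]; push_cast; linarith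
    _ ≤ #(Rel.interedges E A B) := card_mul_le_card_interedges_right (filter_subset _ _)
        fun b hb ↦ (not_le.1 (mem_filter.1 hb).2).le

lemma sub_mul_le_card_interedges (hα : 0 ≤ α) (hcard : Nat.card V = 2 * n)
    (hne : ¬ AlphaExtremal α E) {A B : Finset V} {m : ℝ} (hA : m ≤ #A) (hB : m ≤ #B) :
    (m - (1 - α) * n) * (α * n) ≤ #(Rel.interedges E A B) := by
  set A₁ := {a ∈ A | (#{b ∈ B | E a b} : ℝ) ≤ α * n}
  have hαn : 0 ≤ α * n := mul_nonneg hα n.cast_nonneg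
  rcases le_or_gt ((1 - α) * n) #A₁ with h | h
  · calc (m - (1 - α) * n) * (α * n) ≤ (#B - (1 - α) * n) * (α * n) := by gcongr
      _ ≤ #(Rel.interedges E A₁ B) := sub_mul_le_card_interedges_of_forall_le hα hcard hne h
          fun a ha ↦ (mem_filter.1 ha).2
      _ ≤ #(Rel.interedges E A B) := by
          exact_mod_cast card_le_card (Rel.interedges_mono (filter_subset _ _) subset_rfl)
  · have hsplit := card_filter_add_card_filter_not (s := A) fun a ↦ (#{b ∈ B | E a b} : ℝ) ≤ α * n
    calc (m - (1 - α) * n) * (α * n)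
        ≤ #{a ∈ A | ¬ (#{b ∈ B | E a b} : ℝ) ≤ α * n} * (α * n) := by
          gcongr; rw [← hsplit] at hA; push_cast at hA; linarith
      _ ≤ #(Rel.interedges E A B) := card_mul_le_card_interedges_left (filter_subset _ _)
          fun a ha ↦ (not_le.1 (mem_filter.1 ha).2).le

lemma card_filter_card_filter_le_lt [Fintype V] {ε : ℝ} (hα0 : 0 < α) (hα1 : α ≤ 1)
    (hε : ε ≤ α / 8) (hn : 40 ≤ α ^ 3 * n) (hcard : Nat.card V = 2 * n)
    (hne : ¬ AlphaExtremal α E) {B : Finset V} (hB : (1 - ε) * n ≤ #B) :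
    (#{c | (#{b ∈ B | E c b} : ℝ) ≤ α ^ 3 * n} : ℝ) < (1 - α) * n := by
  by_contra! h
  obtain ⟨C, hC, hCcard⟩ := exists_subset_card_eq (Nat.ceil_le.2 h)
  have hα3 : α ^ 3 ≤ α := pow_le_of_le_one hα0.le hα1 (by norm_num)
  have hαn : α ^ 3 * n ≤ α * n := by gcongr
  have hCdeg (c : V) (hc : c ∈ C) : (#{b ∈ B | E c b} : ℝ) ≤ α ^ 3 * n := (mem_filter.1 (hC hc)).2
  have hlow := sub_mul_le_card_interedges_of_forall_le hα0.le hcard hne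
    (hCcard ▸ Nat.le_ceil _) fun c hc ↦ (hCdeg c hc).trans hαn
  have hhigh := card_interedges_le_card_mul_left hCdeg
  have hCsmall : (#C : ℝ) < (1 - α) * n + 1 := hCcard ▸ Nat.ceil_lt_add_one (by nlinarith)
  have hN : 40 * α ≤ n := by nlinarith
  have hgap : 7 / 8 * (α * n) ≤ #B - (1 - α) * n := by nlinarith
  have hαn0 : 0 < α * n := by nlinarith
  have : 7 / 8 * (α * n) * (α * n) < ((1 - α) * n + 1) * (α ^ 3 * n) :=
    calc 7 / 8 * (α * n) * (α * n) ≤ (#B - (1 - α) * n) * (α * n) := by gcongr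
      _ ≤ #C * (α ^ 3 * n) := hlow.trans hhigh
      _ < ((1 - α) * n + 1) * (α ^ 3 * n) := by gcongr
  nlinarith [sq_nonneg (2 * α - 1), mul_pos hαn0 hαn0]

end NonExtremal

section Counting

variable [Fintype V] [DecidableEq V]

def connectorEdges (E : V → V → Prop) [DecidableRel E] (x y : V) : Finset (V × V) :=
  Rel.interedges E (({a | E a x} : Finset V) \ {x, y}) (({b | E y b} : Finset V) \ {x, y})

def absorberCompletions (E : V → V → Prop) [DecidableRel E] (x y c b : V) : Finset (V × V) :=
  {q ∈ (({a | E a x ∧ E a b} : Finset V) \ {x, y, b, c}) ×ˢ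
    (({d | E y d ∧ E c d} : Finset V) \ {x, y, b, c}) | q.1 ≠ q.2}

variable [DecidableRel E] {x y : V} {α ε : ℝ} {n : ℕ}

lemma isConnector_of_mem_connectorEdges (hloop : ∀ v, ¬ E v v) (hxy : x ≠ y) {p : V × V}
    (hp : p ∈ connectorEdges E x y) : IsConnector E x y p.1 p.2 := by
  simp only [connectorEdges, Rel.mem_interedges_iff, mem_sdiff, mem_filter, mem_univ, true_and,
    mem_insert, mem_singleton, not_or] at hp
  obtain ⟨⟨hax, hax', hay⟩, ⟨hyb, hbx, hby⟩, hab⟩ := hp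
  have hab' : p.1 ≠ p.2 := fun h ↦ hloop p.1 (h ▸ hab)
  refine ⟨?_, hax, hab, hyb⟩
  simp only [List.pairwise_cons, List.mem_cons, List.not_mem_nil, or_false, forall_eq_or_imp,
    forall_eq, List.Pairwise.nil]
  tauto

lemma isAbsorber_of_mem_absorberCompletions {c b : V} (hcb : IsConnector E x y c b)
    {q : V × V} (hq : q ∈ absorberCompletions E x y c b) : IsAbsorber E x y q.1 b c q.2 := by
  obtain ⟨hdist, hcx, hcb, hyb⟩ := hcb
  simp only [absorberCompletions, mem_filter, mem_product, mem_sdiff, mem_univ, true_and,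
    mem_insert, mem_singleton, not_or] at hq
  obtain ⟨⟨⟨⟨hax, hab⟩, hax', hay, hab', hac⟩, ⟨hyd, hcd⟩, hdx, hdy, hdb, hdc⟩, had⟩ := hq
  refine ⟨?_, hab, hcb, hcd, hax, hcx, hyb, hyd⟩
  simp only [List.pairwise_cons, List.mem_cons, List.not_mem_nil, or_false, forall_eq_or_imp,
    forall_eq, List.Pairwise.nil] at hdist ⊢
  tauto

lemma sub_four_mul_sub_five_le_card_absorberCompletions {c b : V} {t : ℝ} (ht : 5 ≤ t)
    (ha : t ≤ #{a | E a x ∧ E a b}) (hd : t ≤ #{d | E y d ∧ E c d}) :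
    (t - 4) * (t - 5) ≤ #(absorberCompletions E x y c b) := by
  have hfour (s : Finset V) : (#s : ℝ) - 4 ≤ #(s \ {x, y, b, c}) :=
    le_trans (by gcongr; exact_mod_cast card_le_four) (cast_card_sub_cast_card_le_card_sdiff _ _)
  set P := ({a | E a x ∧ E a b} : Finset V) \ {x, y, b, c}
  set Q := ({d | E y d ∧ E c d} : Finset V) \ {x, y, b, c}
  have hprod : (#P * #Q : ℝ) ≤ #(absorberCompletions E x y c b) + #P := by
    exact_mod_cast card_mul_card_le_card_filter_ne_add P Q
  have hP : t - 4 ≤ #P := by linarith [hfour {a | E a x ∧ E a b}]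
  have hQ : t - 5 ≤ #Q - 1 := by linarith [hfour {d | E y d ∧ E c d}]
  have : (t - 4) * (t - 5) ≤ #P * (#Q - 1) := mul_le_mul hP hQ (by linarith) (by positivity)
  linarith

lemma card_mul_le_ncard_absorbers {S : Finset (V × V)} {K : ℝ}
    (hS : ∀ p ∈ S, IsConnector E x y p.1 p.2 ∧ K ≤ #(absorberCompletions E x y p.1 p.2)) :
    #S * K ≤ {t : V × V × V × V | IsAbsorber E x y t.1 t.2.1 t.2.2.1 t.2.2.2}.ncard := by
  have hinj : #(S.sigma fun p ↦ absorberCompletions E x y p.1 p.2) ≤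
      {t : V × V × V × V | IsAbsorber E x y t.1 t.2.1 t.2.2.1 t.2.2.2}.ncard := by
    rw [← Set.ncard_coe_finset]
    refine Set.ncard_le_ncard_of_injOn (fun r ↦ (r.2.1, r.1.2, r.1.1, r.2.2)) ?_ ?_
      (Set.toFinite _)
    · rintro ⟨p, q⟩ hr
      rw [mem_coe, mem_sigma] at hr
      exact isAbsorber_of_mem_absorberCompletions (hS p hr.1).1 hr.2
    · rintro ⟨⟨c, b⟩, a, d⟩ - ⟨⟨c', b'⟩, a', d'⟩ - h
      simp only [Prod.mk.injEq] at h
      obtain ⟨rfl, rfl, rfl, rfl⟩ := h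
      rfl
  calc #S * K ≤ ∑ p ∈ S, (#(absorberCompletions E x y p.1 p.2) : ℝ) := by
        rw [← nsmul_eq_mul]; exact card_nsmul_le_sum _ _ _ fun p hp ↦ (hS p hp).2
    _ = #(S.sigma fun p ↦ absorberCompletions E x y p.1 p.2) := by
        rw [card_sigma, Nat.cast_sum]
    _ ≤ _ := by exact_mod_cast hinj

lemma sub_mul_le_card_connectorEdges (hα : 0 ≤ α) (hcard : Nat.card V = 2 * n)
    (hne : ¬ AlphaExtremal α E) (hx : (1 - ε) * n ≤ #{a | E a x})
    (hy : (1 - ε) * n ≤ #{b | E y b}) :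
    ((1 - ε) * n - 2 - (1 - α) * n) * (α * n) ≤ #(connectorEdges E x y) := by
  have htwo (s : Finset V) : (#s : ℝ) - 2 ≤ #(s \ {x, y}) :=
    le_trans (by gcongr; exact_mod_cast card_le_two) (cast_card_sub_cast_card_le_card_sdiff _ _)
  exact sub_mul_le_card_interedges hα hcard hne (by linarith [htwo {a | E a x}])
    (by linarith [htwo {b | E y b}])

lemma pow_three_mul_sq_le_ncard_connectors (hα0 : 0 < α) (hα2 : α ≤ 1 / 2) (hε : ε ≤ α / 8)
    (hn : 40 ≤ α ^ 3 * n) (hcard : Nat.card V = 2 * n) (hloop : ∀ v, ¬ E v v)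
    (hne : ¬ AlphaExtremal α E) (hxy : x ≠ y) (hx : (1 - ε) * n ≤ #{a | E a x})
    (hy : (1 - ε) * n ≤ #{b | E y b}) :
    α ^ 3 * n ^ 2 ≤ {p : V × V | IsConnector E x y p.1 p.2}.ncard := by
  have hαn : 0 < α * n := by nlinarith [pow_pos hα0 3]
  calc α ^ 3 * n ^ 2 = α * (α * n) ^ 2 := by ring
    _ ≤ 33 / 40 * (α * n) * (α * n) := by nlinarith
    _ ≤ ((1 - ε) * n - 2 - (1 - α) * n) * (α * n) := by
        gcongr; exact mul_le_one_sub_mul_sub_two_sub hα0 hα2 hε hn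
    _ ≤ #(connectorEdges E x y) := sub_mul_le_card_connectorEdges hα0.le hcard hne hx hy
    _ = (connectorEdges E x y : Set (V × V)).ncard := by rw [Set.ncard_coe_finset]
    _ ≤ _ := by
        exact_mod_cast Set.ncard_le_ncard (fun p hp ↦ isConnector_of_mem_connectorEdges hloop hxy hp)

lemma exists_connectors_with_many_absorberCompletions (hα0 : 0 < α) (hα2 : α ≤ 1 / 2)
    (hε : ε ≤ α / 8) (hn : 40 ≤ α ^ 3 * n) (hcard : Nat.card V = 2 * n)
    (hloop : ∀ v, ¬ E v v) (hne : ¬ AlphaExtremal α E) (hxy : x ≠ y)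
    (hx : (1 - ε) * n ≤ #{a | E a x}) (hy : (1 - ε) * n ≤ #{b | E y b}) :
    ∃ S : Finset (V × V), (α * n) ^ 2 / 4 ≤ #S ∧ ∀ p ∈ S, IsConnector E x y p.1 p.2 ∧
      (α ^ 3 * n - 4) * (α ^ 3 * n - 5) ≤ #(absorberCompletions E x y p.1 p.2) := by
  set A₀ : Finset V := {a | E a x}
  set B₀ : Finset V := {b | E y b}
  set Cbad : Finset V := {c | (#{b ∈ B₀ | E c b} : ℝ) ≤ α ^ 3 * n}
  set Bbad : Finset V := {b | (#{a ∈ A₀ | E a b} : ℝ) ≤ α ^ 3 * n}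
  have hCbad : (#Cbad : ℝ) < (1 - α) * n :=
    card_filter_card_filter_le_lt hα0 (by linarith) hε hn hcard hne hy
  have hBbad : (#Bbad : ℝ) < (1 - α) * n :=
    card_filter_card_filter_le_lt (E := fun a b ↦ E b a) hα0 (by linarith) hε hn hcard
      (fun h ↦ hne h.of_swap) hx
  refine ⟨Rel.interedges E ((A₀ \ {x, y}) \ Cbad) ((B₀ \ {x, y}) \ Bbad), ?_, fun p hp ↦
    ⟨isConnector_of_mem_connectorEdges hloop hxy
      (Rel.interedges_mono sdiff_subset sdiff_subset hp), ?_⟩⟩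
  · have hα3n : 0 ≤ α ^ 3 * n := by positivity
    have hsplit := (Nat.cast_le (α := ℝ)).2
      (card_interedges_le_sdiff_add (E := E) (A₀ \ {x, y}) (B₀ \ {x, y}) Cbad Bbad)
    have hC : (#(Rel.interedges E Cbad (B₀ \ {x, y})) : ℝ) ≤ #Cbad * (α ^ 3 * n) :=
      card_interedges_le_card_mul_left fun c hc ↦ le_trans
        (by exact_mod_cast card_le_card (filter_subset_filter _ sdiff_subset)) (mem_filter.1 hc).2
    have hB : (#(Rel.interedges E (A₀ \ {x, y}) Bbad) : ℝ) ≤ #Bbad * (α ^ 3 * n) :=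
      card_interedges_le_card_mul_right fun b hb ↦ le_trans
        (by exact_mod_cast card_le_card (filter_subset_filter _ sdiff_subset)) (mem_filter.1 hb).2
    have hconn : ((1 - ε) * n - 2 - (1 - α) * n) * (α * n) ≤
        #(Rel.interedges E (A₀ \ {x, y}) (B₀ \ {x, y})) :=
      sub_mul_le_card_connectorEdges hα0.le hcard hne hx hy
    have hgap := mul_le_one_sub_mul_sub_two_sub hα0 hα2 hε hn
    have hαn : 0 < α * n := by nlinarith [pow_pos hα0 3]
    push_cast at hsplit
    -- the discarded edges number at most `2 (1 - α) α³ n² ≤ (α n)² / 2`, as `α (1 - α) ≤ 1 / 4`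
    nlinarith [mul_le_mul_of_nonneg_right hCbad.le hα3n, mul_le_mul_of_nonneg_right hBbad.le hα3n,
      mul_le_mul_of_nonneg_right hgap hαn.le, sq_nonneg (2 * α - 1)]
  · simp only [Rel.mem_interedges_iff, mem_sdiff] at hp
    have hc : α ^ 3 * n < #{b ∈ B₀ | E p.1 b} :=
      not_le.1 fun h ↦ hp.1.2 (mem_filter.2 ⟨mem_univ _, h⟩)
    have hb : α ^ 3 * n < #{a ∈ A₀ | E a p.2} :=
      not_le.1 fun h ↦ hp.2.1.2 (mem_filter.2 ⟨mem_univ _, h⟩)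
    rw [filter_filter] at hc hb
    exact sub_four_mul_sub_five_le_card_absorberCompletions (by linarith) hb.le hc.le

lemma pow_twelve_mul_pow_four_le_ncard_absorbers (hα0 : 0 < α) (hα2 : α ≤ 1 / 2)
    (hε : ε ≤ α / 8) (hn : 40 ≤ α ^ 3 * n) (hcard : Nat.card V = 2 * n)
    (hloop : ∀ v, ¬ E v v) (hne : ¬ AlphaExtremal α E) (hxy : x ≠ y)
    (hx : (1 - ε) * n ≤ #{a | E a x}) (hy : (1 - ε) * n ≤ #{b | E y b}) :
    α ^ 12 * n ^ 4 ≤ {t : V × V × V × V | IsAbsorber E x y t.1 t.2.1 t.2.2.1 t.2.2.2}.ncard := by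
  obtain ⟨S, hS, hSabs⟩ :=
    exists_connectors_with_many_absorberCompletions hα0 hα2 hε hn hcard hloop hne hxy hx hy
  have hα4 : α ^ 4 ≤ 1 / 8 := by nlinarith [pow_le_pow_left₀ hα0.le hα2 4]
  have hK : (α ^ 3 * n) ^ 2 / 2 ≤ (α ^ 3 * n - 4) * (α ^ 3 * n - 5) := by nlinarith
  calc α ^ 12 * n ^ 4 = α ^ 4 * (α ^ 8 * n ^ 4) := by ring
    _ ≤ 1 / 8 * (α ^ 8 * n ^ 4) := by gcongr
    _ = (α * n) ^ 2 / 4 * ((α ^ 3 * n) ^ 2 / 2) := by ring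
    _ ≤ #S * ((α ^ 3 * n - 4) * (α ^ 3 * n - 5)) := by gcongr
    _ ≤ _ := card_mul_le_ncard_absorbers hSabs

end Counting

end Digraph

theorem statement13_general (α : ℝ) (hα0 : 0 < α) :
    ∃ ε₀ : ℝ, 0 < ε₀ ∧ ∃ n₀ : ℕ, ∀ ε : ℝ, 0 < ε → ε ≤ ε₀ →
      ∀ n : ℕ, n₀ ≤ n → ∀ (V : Type) (E : V → V → Prop),
        Nat.card V = 2 * n → (∀ v, ¬ E v v) →
        (∀ v, (1 - ε) * n ≤ (outDeg E v : ℝ) ∧ (1 - ε) * n ≤ (inDeg E v : ℝ)) →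
        ¬ AlphaExtremal α E →
        ∀ x y : V, x ≠ y →
          α ^ 12 * (n : ℝ) ^ 4 ≤
            (({t : V × V × V × V |
                IsAbsorber E x y t.1 t.2.1 t.2.2.1 t.2.2.2}).ncard : ℝ) ∧
          α ^ 3 * (n : ℝ) ^ 2 ≤
            (({p : V × V | IsConnector E x y p.1 p.2}).ncard : ℝ) := by
  classical
  rcases le_or_gt α (1 / 2) with hα2 | hα2
  · refine ⟨α / 8, by positivity, ⌈40 / α ^ 3⌉₊,
      fun ε _ hε n hn V E hcard hloop hdeg hne x y hxy ↦ ?_⟩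
    have hn40 : 40 ≤ α ^ 3 * n := by
      linarith [(div_le_iff₀ (pow_pos hα0 3)).1 (Nat.ceil_le.1 hn)]
    have hn0 : n ≠ 0 := by rintro rfl; norm_num at hn40
    have : Finite V := Nat.finite_of_card_ne_zero (by omega)
    have : Fintype V := Fintype.ofFinite V
    have hx : (1 - ε) * n ≤ #{a | E a x} := by simpa only [inDeg_eq_card] using (hdeg x).2
    have hy : (1 - ε) * n ≤ #{b | E y b} := by simpa only [outDeg_eq_card] using (hdeg y).1
    exact ⟨pow_twelve_mul_pow_four_le_ncard_absorbers hα0 hα2 hε hn40 hcard hloop hne hxy hx hy,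
      pow_three_mul_sq_le_ncard_connectors hα0 hα2 hε hn40 hcard hloop hne hxy hx hy⟩
  · refine ⟨1, one_pos, ⌈1 / (2 * α - 1)⌉₊, fun ε _ _ n hn V E hcard _ _ hne _ _ _ ↦ ?_⟩
    have h1 : 1 ≤ (2 * α - 1) * n := by
      linarith [(div_le_iff₀ (by linarith : 0 < 2 * α - 1)).1 (Nat.ceil_le.1 hn)]
    have hn0 : n ≠ 0 := by rintro rfl; norm_num at h1
    have : Finite V := Nat.finite_of_card_ne_zero (by omega)
    have : Fintype V := Fintype.ofFinite V
    exact absurd (alphaExtremal_of_one_le_two_mul_sub_one_mul hcard h1) hne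

theorem statement13 (α : ℝ) (hα0 : 0 < α) (hα : α < 1) :
    ∃ ε₀ : ℝ, 0 < ε₀ ∧ ∃ n₀ : ℕ, ∀ ε : ℝ, 0 < ε → ε ≤ ε₀ →
      ∀ n : ℕ, n₀ ≤ n → ∀ (V : Type) (E : V → V → Prop),
        Nat.card V = 2 * n → (∀ v, ¬ E v v) →
        (∀ v, (1 - ε) * n ≤ (outDeg E v : ℝ) ∧ (1 - ε) * n ≤ (inDeg E v : ℝ)) →
        ¬ AlphaExtremal α E →
        ∀ x y : V, x ≠ y →
          α ^ 12 * (n : ℝ) ^ 4 ≤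
            (({t : V × V × V × V |
                IsAbsorber E x y t.1 t.2.1 t.2.2.1 t.2.2.2}).ncard : ℝ) ∧
          α ^ 3 * (n : ℝ) ^ 2 ≤
            (({p : V × V | IsConnector E x y p.1 p.2}).ncard : ℝ) :=
  statement13_general α hα0
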